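/- Let 𝔤 be the 4-dimensional real Lie algebra with basis X₁, X₂, Y₁, Y₂ whose only nonvanishing bracket among basis elements is [Y₁, Y₂] = X₂ (and [Y₂, Y₁] = −X₂). Let Ω be the alternating bilinear form with Ω(X₁,Y₁) = Ω(X₂,Y₂) = 1 and Ω vanishing on all other pairs of distinct basis elements, and for α > 0 let j_α be the linear map determined by j_α X₁ = αY₁, j_α X₂ = Y₂, j_α Y₁ = −(1/α)X₁, j_α Y₂ = −X₂. Then Ω is a nondegenerate 2-cocycle, j_α is a positive compatible complex structure, the bilinear form g(u,v) := Ω(u, j_α v) is a positive definite inner product, and for every g-orthonormal basis (e₁, e₂, e₃, e₄) of 𝔤 one has Σ_{i=1}^{4} Σ_{k=1}^{4} g(N^{j_α}(e_i, e_k), N^{j_α}(e_i, e_k)) = 8α. -/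

import Mathlib

/-- The algebraic Nijenhuis tensor of a linear map `j` on a Lie algebra. -/
def algNijenhuis {𝔤 : Type*} [LieRing 𝔤] [LieAlgebra ℝ 𝔤] (j : 𝔤 →ₗ[ℝ] 𝔤) (X Y : 𝔤) : 𝔤 :=
  ⁅j X, j Y⁆ - j ⁅j X, Y⁆ - j ⁅X, j Y⁆ - ⁅X, Y⁆

/-!
The form `g u v = Ω u (j v)` is diagonal in the basis `(X₁, X₂, Y₁, Y₂)`, with positive entries
`(α, 1, 1/α, 1)`; this gives positivity, and nondegeneracy of `Ω` follows from `Ω X (j X) > 0`.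
For a symmetric form with an orthogonal basis `b`, Parseval's identity shows that
`∑ i k, h (N eᵢ eₖ) (N eᵢ eₖ)` over a `g`-orthonormal basis `e` equals
`∑ l m, h (N bₗ bₘ) (N bₗ bₘ) / (g bₗ bₗ * g bₘ bₘ)`, so the squared norm of the Nijenhuis tensor
can be computed on `b`. There `N` is nonzero exactly on the ordered pairs from `{X₁, X₂}`,
`{X₁, Y₂}`, `{X₂, Y₁}`, `{Y₁, Y₂}`, each contributing `α`.
-/

namespace LinearMap.BilinForm

section Field

variable {K V : Type*} [Field K] [AddCommGroup V] [Module K V] {ι κ : Type*}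
  [Fintype ι] [Fintype κ] {g : LinearMap.BilinForm K V}

theorem apply_eq_sum_repr_mul (b : Module.Basis κ K V) (x y : V) :
    g x y = ∑ l, b.repr x l * g (b l) y := by
  conv_lhs => rw [← b.sum_repr x]
  simp only [map_sum, map_smul, LinearMap.sum_apply, LinearMap.smul_apply, smul_eq_mul]

theorem apply_basis_eq_mul_repr {b : Module.Basis κ K V} (hb : g.IsOrthoᵢ b) (l : κ) (x : V) :
    g (b l) x = g (b l) (b l) * b.repr x l := by
  conv_lhs => rw [← b.sum_repr x]
  simp only [map_sum, map_smul, smul_eq_mul]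
  rw [Finset.sum_eq_single l (fun m _ hml => by rw [hb hml.symm, mul_zero]) (by simp)]
  ring

theorem sum_apply_mul_apply_div_eq {b : Module.Basis κ K V} (hb : g.IsOrthoᵢ b)
    (hb0 : ∀ l, g (b l) (b l) ≠ 0) (u v : V) :
    ∑ l, g u (b l) * g (b l) v / g (b l) (b l) = g u v := by
  conv_rhs => rw [← g.flip_apply, apply_eq_sum_repr_mul b]
  refine Finset.sum_congr rfl fun l _ => ?_
  rw [apply_basis_eq_mul_repr hb, flip_apply]
  field_simp [hb0 l]

theorem apply_eq_sum_sum_repr_mul (B : V →ₗ[K] V →ₗ[K] K) (b : Module.Basis κ K V)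
    (x y : V) :
    B x y = ∑ l, ∑ m, b.repr x l * b.repr y m * B (b l) (b m) := by
  conv_lhs => rw [← b.sum_repr x, ← b.sum_repr y]
  simp only [map_sum, map_smul, LinearMap.sum_apply, LinearMap.smul_apply, smul_eq_mul,
    Finset.mul_sum]
  rw [Finset.sum_comm]
  exact Finset.sum_congr rfl fun _ _ => Finset.sum_congr rfl fun _ _ => by ring

theorem sum_apply_self_div_eq (hg : g.IsSymm) {e : Module.Basis ι K V} (he : g.IsOrthoᵢ e)
    (he0 : ∀ i, g (e i) (e i) ≠ 0) {b : Module.Basis κ K V} (hb : g.IsOrthoᵢ b)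
    (hb0 : ∀ l, g (b l) (b l) ≠ 0) (B : V →ₗ[K] V →ₗ[K] K) :
    ∑ i, B (e i) (e i) / g (e i) (e i) = ∑ l, B (b l) (b l) / g (b l) (b l) := by
  have coord : ∀ x l, b.repr x l = g (b l) x / g (b l) (b l) := fun x l => by
    rw [apply_basis_eq_mul_repr hb]; field_simp [hb0 l]
  calc ∑ i, B (e i) (e i) / g (e i) (e i)
      = ∑ l, ∑ m, (∑ i, g (b l) (e i) * g (e i) (b m) / g (e i) (e i)) /
          (g (b l) (b l) * g (b m) (b m)) * B (b l) (b m) := by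
        simp_rw [apply_eq_sum_sum_repr_mul B b (e _), Finset.sum_div, Finset.sum_mul]
        rw [Finset.sum_comm]
        refine Finset.sum_congr rfl fun l _ => ?_
        rw [Finset.sum_comm]
        refine Finset.sum_congr rfl fun m _ => Finset.sum_congr rfl fun i _ => ?_
        rw [coord, coord, hg.eq (e i) (b m)]
        field_simp
    _ = ∑ l, B (b l) (b l) / g (b l) (b l) := by
        simp_rw [sum_apply_mul_apply_div_eq he he0]
        refine Finset.sum_congr rfl fun l _ => ?_
        rw [Finset.sum_eq_single l (fun m _ hml => by rw [hb hml.symm, zero_div, zero_mul])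
          (by simp)]
        field_simp [hb0 l]

theorem sum_sum_apply_div_eq {W : Type*} [AddCommGroup W] [Module K W] (hg : g.IsSymm)
    {e : Module.Basis ι K V} (he : g.IsOrthoᵢ e) (he0 : ∀ i, g (e i) (e i) ≠ 0)
    {b : Module.Basis κ K V} (hb : g.IsOrthoᵢ b) (hb0 : ∀ l, g (b l) (b l) ≠ 0)
    (N : V →ₗ[K] V →ₗ[K] W) (h : W →ₗ[K] W →ₗ[K] K) :
    ∑ i, ∑ k, h (N (e i) (e k)) (N (e i) (e k)) / (g (e i) (e i) * g (e k) (e k)) =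
      ∑ l, ∑ m, h (N (b l) (b m)) (N (b l) (b m)) / (g (b l) (b l) * g (b m) (b m)) := by
  have inner (i) := sum_apply_self_div_eq hg he he0 hb hb0 (h.compl₁₂ (N (e i)) (N (e i)))
  have outer (m) := sum_apply_self_div_eq hg he he0 hb hb0
    (h.compl₁₂ (N.flip (b m)) (N.flip (b m)))
  simp only [compl₁₂_apply, LinearMap.flip_apply] at inner outer
  calc ∑ i, ∑ k, h (N (e i) (e k)) (N (e i) (e k)) / (g (e i) (e i) * g (e k) (e k))
      = ∑ i, (∑ m, h (N (e i) (b m)) (N (e i) (b m)) / g (b m) (b m)) / g (e i) (e i) := by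
        simp_rw [div_mul_eq_div_div_swap, ← Finset.sum_div, inner]
    _ = ∑ m, (∑ l, h (N (b l) (b m)) (N (b l) (b m)) / g (b l) (b l)) / g (b m) (b m) := by
        simp_rw [Finset.sum_div]
        rw [Finset.sum_comm]
        refine Finset.sum_congr rfl fun m _ => ?_
        rw [← Finset.sum_div, ← outer, Finset.sum_div]
        exact Finset.sum_congr rfl fun i _ => div_right_comm _ _ _
    _ = _ := by
        simp_rw [Finset.sum_div, div_div]
        exact Finset.sum_comm

end Field

theorem apply_self_pos {K V κ : Type*} [Field K] [LinearOrder K] [IsStrictOrderedRing K]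
    [AddCommGroup V] [Module K V] [Fintype κ] {g : LinearMap.BilinForm K V}
    {b : Module.Basis κ K V} (hb : g.IsOrthoᵢ b)
    (hb0 : ∀ l, 0 < g (b l) (b l)) {x : V} (hx : x ≠ 0) : 0 < g x x := by
  obtain ⟨l, hl⟩ : ∃ l, b.repr x l ≠ 0 := by
    by_contra! h
    exact hx (b.repr.map_eq_zero_iff.mp (Finsupp.ext h))
  rw [apply_eq_sum_repr_mul b]
  refine Finset.sum_pos' (fun m _ => ?_) ⟨l, Finset.mem_univ l, ?_⟩
  · rw [apply_basis_eq_mul_repr hb]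
    nlinarith [hb0 m, mul_self_nonneg (b.repr x m)]
  · rw [apply_basis_eq_mul_repr hb]
    nlinarith [hb0 l, mul_self_pos.2 hl]

end LinearMap.BilinForm

section Nijenhuis

variable {𝔤 : Type*} [LieRing 𝔤] [LieAlgebra ℝ 𝔤]

def algNijenhuisₗ (j : 𝔤 →ₗ[ℝ] 𝔤) : 𝔤 →ₗ[ℝ] 𝔤 →ₗ[ℝ] 𝔤 :=
  LinearMap.mk₂ ℝ (algNijenhuis j)
    (fun X X' Y => by simp only [algNijenhuis, map_add, add_lie]; abel)
    (fun c X Y => by simp only [algNijenhuis, map_smul, smul_lie, smul_sub])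
    (fun X Y Y' => by simp only [algNijenhuis, map_add, lie_add]; abel)
    (fun c X Y => by simp only [algNijenhuis, map_smul, lie_smul, smul_sub])

@[simp]
theorem algNijenhuisₗ_apply (j : 𝔤 →ₗ[ℝ] 𝔤) (X Y : 𝔤) :
    algNijenhuisₗ j X Y = algNijenhuis j X Y := rfl

end Nijenhuis

namespace ThurstonLieAlgebra

variable {𝔤 : Type*} [LieRing 𝔤] [LieAlgebra ℝ 𝔤] {b : Module.Basis (Fin 4) ℝ 𝔤}
  {Ω : 𝔤 →ₗ[ℝ] 𝔤 →ₗ[ℝ] ℝ} {α : ℝ} {j : 𝔤 →ₗ[ℝ] 𝔤}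

theorem lie_eq_smul (hbr : ∀ i k : Fin 4, ⁅b i, b k⁆ =
      if i = 2 ∧ k = 3 then b 1 else if i = 3 ∧ k = 2 then -(b 1) else 0) (X Y : 𝔤) :
    ⁅X, Y⁆ = (b.repr X 2 * b.repr Y 3 - b.repr X 3 * b.repr Y 2) • b 1 := by
  conv_lhs => rw [← b.sum_repr X, ← b.sum_repr Y]
  simp only [Fin.sum_univ_four, add_lie, lie_add, smul_lie, lie_smul, hbr]
  simp only [Fin.isValue, Fin.reduceEq, and_self, ↓reduceIte, smul_zero, add_zero, and_false,
    and_true, smul_neg, zero_add]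
  module

theorem cocycle (hbr : ∀ i k : Fin 4, ⁅b i, b k⁆ =
      if i = 2 ∧ k = 3 then b 1 else if i = 3 ∧ k = 2 then -(b 1) else 0)
    (hΩ : ∀ i k : Fin 4, Ω (b i) (b k) = !![0,0,1,0; 0,0,0,1; -1,0,0,0; 0,-1,0,0] i k)
    (X Y Z : 𝔤) : Ω ⁅X, Y⁆ Z + Ω ⁅Y, Z⁆ X + Ω ⁅Z, X⁆ Y = 0 := by
  have hΩ1 (W : 𝔤) : Ω (b 1) W = b.repr W 3 := by
    conv_lhs => rw [← b.sum_repr W]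
    simp only [Fin.sum_univ_four]
    simp [hΩ]
  simp only [lie_eq_smul hbr, map_smul, LinearMap.smul_apply, smul_eq_mul, hΩ1]
  ring

theorem j_j_eq_neg (hα : α ≠ 0) (hj0 : j (b 0) = α • b 2) (hj1 : j (b 1) = b 3)
    (hj2 : j (b 2) = -((1/α) • b 0)) (hj3 : j (b 3) = -(b 1)) (X : 𝔤) : j (j X) = -X := by
  have : j ∘ₗ j = -LinearMap.id := b.ext fun i => by
    fin_cases i <;> simp [hj0, hj1, hj2, hj3, smul_smul, hα]
  exact LinearMap.congr_fun this X

theorem apply_j_j (hα : α ≠ 0)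
    (hΩ : ∀ i k : Fin 4, Ω (b i) (b k) = !![0,0,1,0; 0,0,0,1; -1,0,0,0; 0,-1,0,0] i k)
    (hj0 : j (b 0) = α • b 2) (hj1 : j (b 1) = b 3)
    (hj2 : j (b 2) = -((1/α) • b 0)) (hj3 : j (b 3) = -(b 1)) (X Y : 𝔤) :
    Ω (j X) (j Y) = Ω X Y := by
  have : Ω.compl₁₂ j j = Ω := LinearMap.ext_basis b b fun l m => by
    fin_cases l <;> fin_cases m <;> simp [hj0, hj1, hj2, hj3, hΩ, hα]
  exact LinearMap.congr_fun₂ this X Y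

theorem apply_basis_j_basis
    (hΩ : ∀ i k : Fin 4, Ω (b i) (b k) = !![0,0,1,0; 0,0,0,1; -1,0,0,0; 0,-1,0,0] i k)
    (hj0 : j (b 0) = α • b 2) (hj1 : j (b 1) = b 3)
    (hj2 : j (b 2) = -((1/α) • b 0)) (hj3 : j (b 3) = -(b 1)) (l m : Fin 4) :
    Ω (b l) (j (b m)) = if l = m then ![α, 1, α⁻¹, 1] l else 0 := by
  fin_cases l <;> fin_cases m <;> simp [hj0, hj1, hj2, hj3, hΩ]

theorem sum_sum_algNijenhuis_basis (hα : α ≠ 0) (hbr : ∀ i k : Fin 4, ⁅b i, b k⁆ =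
      if i = 2 ∧ k = 3 then b 1 else if i = 3 ∧ k = 2 then -(b 1) else 0)
    (hΩ : ∀ i k : Fin 4, Ω (b i) (b k) = !![0,0,1,0; 0,0,0,1; -1,0,0,0; 0,-1,0,0] i k)
    (hj0 : j (b 0) = α • b 2) (hj1 : j (b 1) = b 3)
    (hj2 : j (b 2) = -((1/α) • b 0)) (hj3 : j (b 3) = -(b 1)) :
    ∑ l, ∑ m, Ω (algNijenhuis j (b l) (b m)) (j (algNijenhuis j (b l) (b m))) /
      (Ω (b l) (j (b l)) * Ω (b m) (j (b m))) = 8 * α := by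
  simp [Fin.sum_univ_four, algNijenhuis, hj0, hj1, hj2, hj3, hbr, hΩ]
  field_simp
  ring

end ThurstonLieAlgebra

theorem stmt_7 (𝔤 : Type*) [LieRing 𝔤] [LieAlgebra ℝ 𝔤]
    (b : Module.Basis (Fin 4) ℝ 𝔤)
    (hbr : ∀ i k : Fin 4, ⁅b i, b k⁆ =
      if i = 2 ∧ k = 3 then b 1 else if i = 3 ∧ k = 2 then -(b 1) else 0)
    (Ω : 𝔤 →ₗ[ℝ] 𝔤 →ₗ[ℝ] ℝ)
    (hΩ : ∀ i k : Fin 4, Ω (b i) (b k) =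
      !![0,0,1,0; 0,0,0,1; -1,0,0,0; 0,-1,0,0] i k)
    (α : ℝ) (hα : 0 < α)
    (j : 𝔤 →ₗ[ℝ] 𝔤)
    (hj0 : j (b 0) = α • b 2) (hj1 : j (b 1) = b 3)
    (hj2 : j (b 2) = -((1/α) • b 0)) (hj3 : j (b 3) = -(b 1)) :
    (∀ X : 𝔤, (∀ Y : 𝔤, Ω X Y = 0) → X = 0) ∧
    (∀ X Y Z : 𝔤, Ω ⁅X, Y⁆ Z + Ω ⁅Y, Z⁆ X + Ω ⁅Z, X⁆ Y = 0) ∧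
    (∀ X : 𝔤, j (j X) = -X) ∧
    (∀ X Y : 𝔤, Ω (j X) (j Y) = Ω X Y) ∧
    (∀ X : 𝔤, X ≠ 0 → 0 < Ω X (j X)) ∧
    (∀ u v : 𝔤, Ω u (j v) = Ω v (j u)) ∧
    (∀ u : 𝔤, u ≠ 0 → 0 < Ω u (j u)) ∧
    (∀ e : Module.Basis (Fin 4) ℝ 𝔤,
      (∀ i k : Fin 4, Ω (e i) (j (e k)) = if i = k then 1 else 0) →
      ∑ i : Fin 4, ∑ k : Fin 4,
        Ω (algNijenhuis j (e i) (e k)) (j (algNijenhuis j (e i) (e k))) = 8 * α) := by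
  have hα0 := hα.ne'
  have hgram := ThurstonLieAlgebra.apply_basis_j_basis hΩ hj0 hj1 hj2 hj3
  set g : LinearMap.BilinForm ℝ 𝔤 := Ω.compl₂ j
  have hg : g.IsSymm := ⟨LinearMap.congr_fun₂ <| LinearMap.ext_basis b b (B' := g.flip)
    fun l m => by
      rcases eq_or_ne l m with rfl | h
      · rfl
      · simp [g, hgram, h, h.symm]⟩
  have hb : g.IsOrthoᵢ b := LinearMap.isOrthoᵢ_def.2 fun l m hlm => by simp [g, hgram, hlm]
  have hb0 (l : Fin 4) : 0 < g (b l) (b l) := by fin_cases l <;> simp [g, hgram, hα]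
  have hpos (X : 𝔤) (hX : X ≠ 0) : 0 < Ω X (j X) :=
    LinearMap.BilinForm.apply_self_pos hb hb0 hX
  refine ⟨fun X hX => by_contra fun h => (hpos X h).ne' (hX (j X)),
    ThurstonLieAlgebra.cocycle hbr hΩ, ThurstonLieAlgebra.j_j_eq_neg hα0 hj0 hj1 hj2 hj3,
    ThurstonLieAlgebra.apply_j_j hα0 hΩ hj0 hj1 hj2 hj3, hpos, hg.eq, hpos, fun e he => ?_⟩
  have he' : g.IsOrthoᵢ e := LinearMap.isOrthoᵢ_def.2 fun i k hik => by simp [g, he, hik]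
  have key := LinearMap.BilinForm.sum_sum_apply_div_eq hg he' (fun i => by simp [g, he]) hb
    (fun l => (hb0 l).ne') (algNijenhuisₗ j) g
  simp only [g, he, LinearMap.compl₂_apply, algNijenhuisₗ_apply, if_true, mul_one, div_one]
    at key
  rw [key]
  exact ThurstonLieAlgebra.sum_sum_algNijenhuis_basis hα0 hbr hΩ hj0 hj1 hj2 hj3
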